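/- arXiv:1912.07201 — 2 statements merged into one kernel-verified Lean document; each statement's English description precedes it below -/
import Mathlib

section
/- Let 0 < ρ < σ, and suppose Ls_k^l(σ) converges absolutely. Then Ls_k^l(σ) = Σ_{h=0}^{n} Ls_{k_h}^{l_h}(ρ) · Ls_{k^h}^{l^h}(ρ; σ), where k_h = (k₁,…,k_h), k^h = (k_{h+1},…,k_n), and similarly for l_h, l^h. -/
/-!
Splitting the outermost integral as `∫₀^σ = ∫₀^ρ + ∫_ρ^σ` and inducting on the depth decomposes
the simplex according to the position of `ρ` among the variables. All integrals involved exist: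
`A` is even and `2π`-periodic, and on `(0, π]` we have
`log θ - 1 ≤ A θ ≤ 2`, so `|A θ| ≤ C θ^(-ε)` and `A ^ m` is integrable near its singularities.
-/

open MeasureTheory Real

/-- `A θ = log |2 sin (θ/2)|`. -/
noncomputable def A (θ : ℝ) : ℝ := Real.log |2 * Real.sin (θ / 2)|

/-- Nested iterated integral; the list is in reverse order (outermost variable first). -/
noncomputable def LsNest (ρ : ℝ) : List (ℕ × ℕ) → ℝ → ℝ
  | [] => fun _ => 1
  | p :: rest => fun σ => ∫ θ in ρ..σ, θ ^ p.2 * A θ ^ (p.1 - 1 - p.2) * LsNest ρ rest θ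

/-- The iterated log-sine integral `Ls_k^l(ρ; σ)`. -/
noncomputable def Ls {n : ℕ} (k l : Fin n → ℕ) (ρ σ : ℝ) : ℝ :=
  (-1 : ℝ) ^ n * LsNest ρ ((List.ofFn fun u => (k u, l u)).reverse) σ

lemma A_neg (θ : ℝ) : A (-θ) = A θ := by
  simp only [A, neg_div, sin_neg, mul_neg, abs_neg]

lemma A_periodic : Function.Periodic A (2 * π) := fun θ => by
  simp only [A, add_div, mul_div_cancel_left₀ π two_ne_zero, sin_add_pi, mul_neg, abs_neg]

lemma A_le_two (θ : ℝ) : A θ ≤ 2 := by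
  refine (log_le_self (abs_nonneg _)).trans ?_
  rw [abs_mul, abs_two]
  linarith [abs_sin_le_one (θ / 2)]

lemma log_sub_one_le_A {θ : ℝ} (h0 : 0 < θ) (hπ : θ ≤ π) : log θ - 1 ≤ A θ := by
  -- Jordan's inequality `sin x ≥ 2x/π` on `[0, π/2]`, together with `π ≤ 4`
  have hsin : θ / 2 ≤ 2 * sin (θ / 2) := by
    have := mul_le_sin (x := θ / 2) (by linarith) (by linarith)
    have : θ / 2 ≤ 2 / π * θ := by
      rw [div_mul_eq_mul_div, le_div_iff₀ pi_pos]
      nlinarith [pi_le_four]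
    linarith
  have hlog : log (θ / 2) ≤ A θ :=
    log_le_log (by positivity) (hsin.trans (le_abs_self _))
  rw [log_div h0.ne' two_ne_zero] at hlog
  linarith [log_two_lt_d9]

lemma abs_A_le_rpow {ε θ : ℝ} (hε : 0 < ε) (h0 : 0 < θ) (hπ : θ ≤ π) :
    |A θ| ≤ (2 * π ^ ε + 1 / ε) * θ ^ (-ε) := by
  have hone : 1 ≤ π ^ ε * θ ^ (-ε) := by
    rw [rpow_neg h0.le, ← div_eq_mul_inv, ← div_rpow pi_pos.le h0.le]
    exact one_le_rpow ((one_le_div h0).2 hπ) hε.le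
  have hlog : -log θ ≤ θ ^ (-ε) / ε := by
    rw [← log_inv, rpow_neg h0.le, ← inv_rpow h0.le]
    exact log_le_rpow_div (inv_nonneg.2 h0.le) hε
  have hC : (2 * π ^ ε + 1 / ε) * θ ^ (-ε) = 2 * (π ^ ε * θ ^ (-ε)) + θ ^ (-ε) / ε := by ring
  have hpos : 0 ≤ θ ^ (-ε) / ε := by positivity
  rw [abs_le, hC]
  constructor <;> linarith [A_le_two θ, log_sub_one_le_A h0 hπ]

lemma intervalIntegrable_A_pow_zero_pi (m : ℕ) :
    IntervalIntegrable (fun θ => A θ ^ m) volume 0 π := by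
  set ε : ℝ := 1 / (m + 1)
  have hε : 0 < ε := by positivity
  have hεm : -1 < -ε * m := by
    have : ε * m < 1 := by
      rw [div_mul_eq_mul_div, one_mul, div_lt_one (by positivity)]
      linarith
    linarith
  set C := 2 * π ^ ε + 1 / ε
  refine ((intervalIntegral.intervalIntegrable_rpow' hεm).const_mul (C ^ m)).mono_fun'
    ((by unfold A; fun_prop : Measurable A).pow_const m).aestronglyMeasurable ?_
  rw [Set.uIoc_of_le pi_pos.le, Filter.EventuallyLE,
    ae_restrict_iff' measurableSet_Ioc]
  filter_upwards with θ ⟨h0, hπ⟩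
  calc ‖A θ ^ m‖ = |A θ| ^ m := by rw [norm_eq_abs, abs_pow]
    _ ≤ (C * θ ^ (-ε)) ^ m := pow_le_pow_left₀ (abs_nonneg _) (abs_A_le_rpow hε h0 hπ) m
    _ = C ^ m * θ ^ (-ε * m) := by rw [mul_pow, rpow_mul_natCast h0.le]

lemma intervalIntegrable_A_pow (m : ℕ) (a b : ℝ) :
    IntervalIntegrable (fun θ => A θ ^ m) volume a b := by
  have h0π := intervalIntegrable_A_pow_zero_pi m
  have hπ0 : IntervalIntegrable (fun θ => A θ ^ m) volume (-π) 0 := by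
    simpa [A_neg] using ((IntervalIntegrable.iff_comp_neg (by simp)).1 h0π).symm
  refine (A_periodic.comp (· ^ m)).intervalIntegrable (t := -π) (by positivity) ?_ a b
  rw [show -π + 2 * π = π by ring]
  exact hπ0.trans h0π

lemma intervalIntegrable_pow_mul_A_pow_mul {g : ℝ → ℝ} (hg : Continuous g) (j m : ℕ) (a b : ℝ) :
    IntervalIntegrable (fun θ => θ ^ j * A θ ^ m * g θ) volume a b :=
  (((intervalIntegrable_A_pow m a b).continuousOn_mul (continuous_pow j).continuousOn)
    ).mul_continuousOn hg.continuousOn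

lemma continuous_LsNest (ρ : ℝ) : ∀ L : List (ℕ × ℕ), Continuous (LsNest ρ L)
  | [] => continuous_const
  | _ :: L => intervalIntegral.continuous_primitive
      (intervalIntegrable_pow_mul_A_pow_mul (continuous_LsNest ρ L) _ _) ρ

lemma intervalIntegrable_LsNest_integrand (ρ : ℝ) (p : ℕ × ℕ) (L : List (ℕ × ℕ)) (a b : ℝ) :
    IntervalIntegrable (fun θ => θ ^ p.2 * A θ ^ (p.1 - 1 - p.2) * LsNest ρ L θ) volume a b :=
  intervalIntegrable_pow_mul_A_pow_mul (continuous_LsNest ρ L) _ _ a b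

lemma LsNest_cons_eq_add (ρ ρ' σ : ℝ) (p : ℕ × ℕ) (L : List (ℕ × ℕ)) :
    LsNest ρ (p :: L) σ =
      LsNest ρ (p :: L) ρ' + ∫ θ in ρ'..σ, θ ^ p.2 * A θ ^ (p.1 - 1 - p.2) * LsNest ρ L θ :=
  (intervalIntegral.integral_add_adjacent_intervals
    (intervalIntegrable_LsNest_integrand ρ p L ρ ρ')
    (intervalIntegrable_LsNest_integrand ρ p L ρ' σ)).symm

/-- The `j` outermost variables range over `(ρ, σ)`, the remaining ones over `(0, ρ)`. -/
lemma LsNest_zero_eq_sum (ρ : ℝ) : ∀ (L : List (ℕ × ℕ)) (σ : ℝ),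
    LsNest 0 L σ = ∑ j ∈ Finset.range (L.length + 1),
      LsNest ρ (L.take j) σ * LsNest 0 (L.drop j) ρ
  | [], σ => by simp [LsNest]
  | p :: L, σ => by
    have hinner : (∫ θ in ρ..σ, θ ^ p.2 * A θ ^ (p.1 - 1 - p.2) * LsNest 0 L θ) =
        ∑ j ∈ Finset.range (L.length + 1), LsNest ρ (p :: L.take j) σ * LsNest 0 (L.drop j) ρ := by
      simp_rw [LsNest_zero_eq_sum ρ L, Finset.mul_sum, ← mul_assoc]
      rw [intervalIntegral.integral_finsetSum fun j _ =>
        (intervalIntegrable_LsNest_integrand ρ p _ ρ σ).mul_const _]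
      simp only [intervalIntegral.integral_mul_const, LsNest]
    rw [LsNest_cons_eq_add 0 ρ σ, hinner, List.length_cons,
      Finset.sum_range_succ' _ (L.length + 1), add_comm]
    simp only [List.take_succ_cons, List.drop_succ_cons, List.take_zero, List.drop_zero,
      LsNest.eq_1, one_mul]

lemma LsNest_reverse_eq_sum (ρ σ : ℝ) (P : List (ℕ × ℕ)) :
    LsNest 0 P.reverse σ = ∑ j ∈ Finset.range (P.length + 1),
      LsNest 0 (P.take j).reverse ρ * LsNest ρ (P.drop j).reverse σ := by
  rw [LsNest_zero_eq_sum ρ, List.length_reverse, ← Finset.sum_range_reflect]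
  refine Finset.sum_congr rfl fun j hj => ?_
  have hj : j ≤ P.length := Nat.lt_succ_iff.mp (Finset.mem_range.mp hj)
  rw [List.take_reverse, List.drop_reverse, mul_comm,
    show P.length - (P.length + 1 - 1 - j) = j by omega]

lemma ofFn_castLE_eq_take_ofFn {α : Type*} {n m : ℕ} (hm : m ≤ n) (v : Fin n → α) :
    List.ofFn (fun u : Fin m => v ⟨u.1, lt_of_lt_of_le u.isLt hm⟩) = (List.ofFn v).take m :=
  Fin.ofFn_take_eq_take_ofFn hm v

lemma ofFn_addNat_eq_drop_ofFn {α : Type*} {n m : ℕ} (v : Fin n → α) :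
    List.ofFn (fun u : Fin (n - m) => v ⟨m + u.1, by omega⟩) = (List.ofFn v).drop m :=
  List.ext_getElem (by simp) fun i _ _ => by simp

/-- Decomposition formula: if `Ls_k^l(σ)` converges absolutely and `0 < ρ < σ`, then
`Ls_k^l(σ) = Σ_{h=0}^{n} Ls_{k_h}^{l_h}(ρ) Ls_{k^h}^{l^h}(ρ; σ)`. -/
theorem stmt3 (n : ℕ) (k l : Fin n → ℕ) (ρ σ : ℝ) :
    Ls k l 0 σ = ∑ h : Fin (n + 1),
      Ls (fun u : Fin h.1 => k ⟨u.1, lt_of_lt_of_le u.isLt (Nat.lt_succ_iff.mp h.isLt)⟩)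
        (fun u : Fin h.1 => l ⟨u.1, lt_of_lt_of_le u.isLt (Nat.lt_succ_iff.mp h.isLt)⟩) 0 ρ *
      Ls (fun u : Fin (n - h.1) => k ⟨h.1 + u.1, by have h1 := u.isLt; have h2 := h.isLt; omega⟩)
        (fun u : Fin (n - h.1) => l ⟨h.1 + u.1, by have h1 := u.isLt; have h2 := h.isLt; omega⟩)
        ρ σ := by
  set P := List.ofFn fun u => (k u, l u)
  calc Ls k l 0 σ = (-1) ^ n * LsNest 0 P.reverse σ := rfl
    _ = ∑ h : Fin (n + 1), (-1) ^ n *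
          (LsNest 0 (P.take h).reverse ρ * LsNest ρ (P.drop h).reverse σ) := by
      rw [LsNest_reverse_eq_sum ρ, List.length_ofFn, Finset.mul_sum,
        Fin.sum_univ_eq_sum_range (fun j => (-1) ^ n *
          (LsNest 0 (P.take j).reverse ρ * LsNest ρ (P.drop j).reverse σ))]
    _ = _ := Finset.sum_congr rfl fun h _ => by
      have hh : h.1 ≤ n := Nat.lt_succ_iff.mp h.isLt
      rw [Ls, Ls, ofFn_castLE_eq_take_ofFn hh (fun u => (k u, l u)),
        ofFn_addNat_eq_drop_ofFn (fun u => (k u, l u)),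
        show (-1 : ℝ) ^ n = (-1) ^ h.1 * (-1) ^ (n - h.1) by rw [← pow_add, Nat.add_sub_cancel' hh]]
      ring
end

section
/- The Riemann zeta value ζ(3) satisfies ζ(3) = (3/2) SLs(3; π/3) = (3/2) ∫_0^{π/3} (θ - π/3) log|2 sin(θ/2)| dθ. -/
/-!
Expanding `-log ‖1 - r e^{iθ}‖ = ∑ rⁿ cos (nθ) / n` for `|r| < 1` and integrating termwise against
`θ - σ` gives `∫₀^σ (θ - σ) log ‖1 - r e^{iθ}‖ dθ = ∑ (1 - cos nσ) / n³ · rⁿ`. Letting `r → 1⁻`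
(dominated convergence on the left, with majorant `|θ - σ| (log 2 + |log sin θ|)`; Abel's theorem
on the right) gives the same identity at `r = 1`, where `‖1 - e^{iθ}‖ = |2 sin (θ / 2)|`. At
`σ = π / 3`, `cos (nπ/3) = 1/2 - [2 ∣ n] - 3/2 [3 ∣ n] + 3 [6 ∣ n]`, so `∑ cos (nπ/3) / n³ = ζ(3) / 3` and the
right side is `2 ζ(3) / 3`.
-/

open Real Filter Topology MeasureTheory

theorem integral_sub_mul_cos_mul {c : ℝ} (hc : c ≠ 0) (σ : ℝ) :
    ∫ θ in (0:ℝ)..σ, (θ - σ) * cos (c * θ) = (cos (c * σ) - 1) / c ^ 2 := by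
  have hderiv : ∀ θ ∈ Set.uIcc 0 σ, HasDerivAt
      (fun θ => (θ - σ) * sin (c * θ) / c + cos (c * θ) / c ^ 2) ((θ - σ) * cos (c * θ)) θ := by
    intro θ _
    have hlin : HasDerivAt (fun θ => c * θ) c θ := by simpa using (hasDerivAt_id θ).const_mul c
    refine ((((hasDerivAt_id θ).sub_const σ).mul hlin.sin).div_const c |>.add
      (hlin.cos.div_const (c ^ 2))).congr_deriv ?_
    simp only [id]
    field_simp
    ring
  rw [intervalIntegral.integral_eq_sub_of_hasDerivAt hderiv
    (Continuous.intervalIntegrable (by fun_prop) _ _)]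
  simp [sub_div]

theorem hasSum_pow_mul_cos_div (θ : ℝ) {r : ℝ} (hr : |r| < 1) :
    HasSum (fun n : ℕ => r ^ n * cos (n * θ) / n)
      (-log ‖1 - r * Complex.exp (θ * Complex.I)‖) := by
  have hz : ‖(r : ℂ) * Complex.exp (θ * Complex.I)‖ < 1 := by
    simpa [Complex.norm_exp_ofReal_mul_I] using hr
  convert Complex.hasSum_re (Complex.hasSum_taylorSeries_neg_log hz) using 1
  · ext n
    rw [Complex.div_natCast_re, mul_pow, ← Complex.exp_nat_mul, ← Complex.ofReal_pow,
      Complex.re_ofReal_mul, ← mul_assoc, ← Complex.ofReal_natCast, ← Complex.ofReal_mul,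
      Complex.exp_ofReal_mul_I_re]
  · simp [Complex.log_re]

theorem abs_sin_le_norm_one_sub_mul_exp (r θ : ℝ) :
    |sin θ| ≤ ‖1 - r * Complex.exp (θ * Complex.I)‖ := by
  rw [← abs_norm, ← sq_le_sq, Complex.sq_norm, Complex.normSq_apply]
  simp only [Complex.sub_re, Complex.one_re, Complex.mul_re, Complex.ofReal_re,
    Complex.exp_ofReal_mul_I_re, Complex.ofReal_im, Complex.exp_ofReal_mul_I_im, zero_mul, sub_zero,
    Complex.sub_im, Complex.one_im, Complex.mul_im, add_zero, zero_sub, mul_neg, neg_mul, neg_neg]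
  nlinarith [sq_nonneg (r - cos θ), sin_sq_add_cos_sq θ]

theorem norm_one_sub_mul_exp_le_two {r : ℝ} (hr : |r| ≤ 1) (θ : ℝ) :
    ‖1 - r * Complex.exp (θ * Complex.I)‖ ≤ 2 := by
  calc ‖1 - r * Complex.exp (θ * Complex.I)‖ ≤ ‖(1 : ℂ)‖ + ‖r * Complex.exp (θ * Complex.I)‖ :=
        norm_sub_le _ _
    _ ≤ 1 + 1 := by simpa [Complex.norm_exp_ofReal_mul_I] using hr
    _ = 2 := by norm_num

theorem abs_log_norm_one_sub_mul_exp_le {r : ℝ} (hr : |r| ≤ 1) {θ : ℝ} (hθ : sin θ ≠ 0) :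
    |log ‖1 - r * Complex.exp (θ * Complex.I)‖| ≤ log 2 + |log (sin θ)| := by
  have hlower := abs_sin_le_norm_one_sub_mul_exp r θ
  have hupper := norm_one_sub_mul_exp_le_two hr θ
  have hpos : 0 < |sin θ| := abs_pos.2 hθ
  have h1 : log (sin θ) ≤ log ‖1 - r * Complex.exp (θ * Complex.I)‖ := by
    rw [← log_abs]; exact log_le_log hpos hlower
  have h2 := log_le_log (hpos.trans_le hlower) hupper
  rw [abs_le]
  constructor <;> linarith [neg_abs_le (log (sin θ)), abs_nonneg (log (sin θ)),
    log_nonneg (by norm_num : (1:ℝ) ≤ 2)]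

theorem ae_sin_ne_zero : ∀ᵐ θ : ℝ, sin θ ≠ 0 := by
  have hzeros : {θ : ℝ | sin θ = 0} = Set.range (fun n : ℤ => (n : ℝ) * π) := by
    ext θ; simp [sin_eq_zero_iff]
  have := (Set.countable_range (fun n : ℤ => (n : ℝ) * π)).measure_zero volume
  rw [← hzeros, measure_eq_zero_iff_ae_notMem] at this
  simpa using this

theorem eventually_abs_lt_one_nhdsLT_one : ∀ᶠ r in 𝓝[<] (1 : ℝ), |r| < 1 :=
  Filter.mem_of_superset (Ioo_mem_nhdsLT (by norm_num : (-1 : ℝ) < 1)) fun _ hr => abs_lt.2 hr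

theorem integral_sub_mul_neg_pow_mul_cos_div (σ r : ℝ) (n : ℕ) :
    ∫ θ in (0:ℝ)..σ, (θ - σ) * -(r ^ n * cos (n * θ) / n) = (1 - cos (n * σ)) / n ^ 3 * r ^ n := by
  rcases eq_or_ne n 0 with rfl | hn
  · simp
  have hn' : (n : ℝ) ≠ 0 := Nat.cast_ne_zero.2 hn
  calc ∫ θ in (0:ℝ)..σ, (θ - σ) * -(r ^ n * cos (n * θ) / n)
      = ∫ θ in (0:ℝ)..σ, -(r ^ n / n) * ((θ - σ) * cos (n * θ)) := by
        congr 1; ext θ; ring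
    _ = (1 - cos (n * σ)) / n ^ 3 * r ^ n := by
        rw [intervalIntegral.integral_const_mul, integral_sub_mul_cos_mul hn']
        field_simp
        ring

theorem hasSum_integral_sub_mul_log_norm_one_sub_mul_exp (σ : ℝ) {r : ℝ} (hr : |r| < 1) :
    HasSum (fun n : ℕ => (1 - cos (n * σ)) / n ^ 3 * r ^ n)
      (∫ θ in (0:ℝ)..σ, (θ - σ) * log ‖1 - r * Complex.exp (θ * Complex.I)‖) := by
  simp only [← integral_sub_mul_neg_pow_mul_cos_div]
  refine intervalIntegral.hasSum_integral_of_dominated_convergence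
    (fun n θ => |θ - σ| * |r| ^ n) (fun n => by fun_prop) (fun n => ?_)
    (ae_of_all _ fun θ _ => (summable_geometric_of_lt_one (abs_nonneg r) hr).mul_left _) ?_
    (ae_of_all _ fun θ _ => ?_)
  · refine ae_of_all _ fun θ _ => ?_
    rw [norm_mul, norm_neg, Real.norm_eq_abs, Real.norm_eq_abs, abs_div, abs_mul, abs_pow,
      Nat.abs_cast]
    gcongr
    calc |r| ^ n * |cos (n * θ)| / n ≤ |r| ^ n * |cos (n * θ)| :=
          div_nat_le_self_of_nonnneg (by positivity) n
      _ ≤ |r| ^ n := mul_le_of_le_one_right (by positivity) (abs_cos_le_one _)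
  · simp only [tsum_mul_left]
    exact Continuous.intervalIntegrable (by fun_prop) _ _
  · have := ((hasSum_pow_mul_cos_div θ hr).neg).mul_left (θ - σ)
    simpa using this

theorem tendsto_integral_sub_mul_log_norm_one_sub_mul_exp (σ : ℝ) :
    Tendsto (fun r : ℝ => ∫ θ in (0:ℝ)..σ, (θ - σ) * log ‖1 - r * Complex.exp (θ * Complex.I)‖)
      (𝓝[<] 1) (𝓝 (∫ θ in (0:ℝ)..σ, (θ - σ) * log ‖1 - Complex.exp (θ * Complex.I)‖)) := by
  refine intervalIntegral.tendsto_integral_filter_of_dominated_convergence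
    (fun θ => |θ - σ| * (log 2 + |log (sin θ)|)) (.of_forall fun r => by fun_prop) ?_ ?_ ?_
  · filter_upwards [eventually_abs_lt_one_nhdsLT_one] with r hr
    filter_upwards [ae_sin_ne_zero] with θ hθ _
    rw [norm_mul, Real.norm_eq_abs]
    gcongr
    exact abs_log_norm_one_sub_mul_exp_le hr.le hθ
  · exact (intervalIntegrable_const.add intervalIntegrable_log_sin.abs).continuousOn_mul
      (by fun_prop)
  · filter_upwards [ae_sin_ne_zero] with θ hθ _
    have hne : ‖1 - ((1 : ℝ) : ℂ) * Complex.exp (θ * Complex.I)‖ ≠ 0 :=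
      ((abs_pos.2 hθ).trans_le (abs_sin_le_norm_one_sub_mul_exp 1 θ)).ne'
    have hcont : ContinuousAt
        (fun r : ℝ => (θ - σ) * log ‖1 - r * Complex.exp (θ * Complex.I)‖) 1 :=
      continuousAt_const.mul ((by fun_prop : Continuous _).continuousAt.log hne)
    simpa using tendsto_nhdsWithin_of_tendsto_nhds hcont.tendsto

theorem integral_sub_mul_log_norm_one_sub_exp (σ : ℝ) :
    ∫ θ in (0:ℝ)..σ, (θ - σ) * log ‖1 - Complex.exp (θ * Complex.I)‖ =
      ∑' n : ℕ, (1 - cos (n * σ)) / n ^ 3 := by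
  have hsum : Summable fun n : ℕ => (1 - cos (n * σ)) / n ^ 3 := by
    refine (summable_one_div_nat_pow.2 (by norm_num : 1 < 3)).mul_left 2 |>.of_norm_bounded
      fun n => ?_
    rw [norm_div, norm_pow, Real.norm_natCast, mul_one_div]
    gcongr
    rw [Real.norm_eq_abs, abs_le]
    constructor <;> linarith [neg_one_le_cos (n * σ), cos_le_one (n * σ)]
  have habel := Real.tendsto_tsum_powerSeries_nhdsWithin_lt hsum.hasSum.tendsto_sum_nat
  have hseries : ∀ᶠ r in 𝓝[<] (1 : ℝ), ∑' n : ℕ, (1 - cos (n * σ)) / n ^ 3 * r ^ n =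
      ∫ θ in (0:ℝ)..σ, (θ - σ) * log ‖1 - r * Complex.exp (θ * Complex.I)‖ :=
    eventually_abs_lt_one_nhdsLT_one.mono fun r hr =>
      (hasSum_integral_sub_mul_log_norm_one_sub_mul_exp σ hr).tsum_eq
  exact tendsto_nhds_unique (tendsto_integral_sub_mul_log_norm_one_sub_mul_exp σ)
    (habel.congr' hseries)

theorem hasSum_ite_dvd_one_div_pow {k : ℕ} {S : ℝ} (hS : HasSum (fun n : ℕ => 1 / (n : ℝ) ^ k) S)
    {d : ℕ} (hd : d ≠ 0) :
    HasSum (fun n : ℕ => if d ∣ n then 1 / (n : ℝ) ^ k else 0) (S / d ^ k) := by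
  rw [← (mul_right_injective₀ hd).hasSum_iff]
  · refine (hS.div_const ((d : ℝ) ^ k)).congr_fun fun m => ?_
    simp [mul_pow, div_eq_mul_inv, mul_comm]
  · rintro n hn
    rw [if_neg]
    rintro ⟨m, rfl⟩
    exact hn ⟨m, rfl⟩

theorem cos_nat_mul_pi_div_three (n : ℕ) :
    cos (n * (π / 3)) = 1 / 2 - (if 2 ∣ n then 1 else 0) - 3 / 2 * (if 3 ∣ n then 1 else 0)
      + 3 * (if 6 ∣ n then 1 else 0) := by
  obtain ⟨q, s, hs, rfl⟩ : ∃ q s : ℕ, s < 6 ∧ n = s + 6 * q :=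
    ⟨n / 6, n % 6, Nat.mod_lt _ (by norm_num), by omega⟩
  have hperiod : ((s + 6 * q : ℕ) : ℝ) * (π / 3) = s * (π / 3) + (q : ℤ) * (2 * π) := by
    push_cast; ring
  rw [hperiod, cos_add_int_mul_two_pi]
  have h2 : 2 ∣ s + 6 * q ↔ 2 ∣ s := by omega
  have h3 : 3 ∣ s + 6 * q ↔ 3 ∣ s := by omega
  have h6 : 6 ∣ s + 6 * q ↔ s = 0 := by omega
  simp only [h2, h3, h6]
  interval_cases s
  · norm_num
  · norm_num [cos_pi_div_three]
  · rw [show ((2 : ℕ) : ℝ) * (π / 3) = π - π / 3 by push_cast; ring, cos_pi_sub, cos_pi_div_three]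
    norm_num
  · rw [show ((3 : ℕ) : ℝ) * (π / 3) = π by push_cast; ring, cos_pi]
    norm_num
  · rw [show ((4 : ℕ) : ℝ) * (π / 3) = π / 3 + π by push_cast; ring, cos_add_pi,
      cos_pi_div_three]
    norm_num
  · rw [show ((5 : ℕ) : ℝ) * (π / 3) = 2 * π - π / 3 by push_cast; ring, cos_two_pi_sub,
      cos_pi_div_three]
    norm_num

theorem hasSum_cos_nat_mul_pi_div_three_div_pow {k : ℕ} {S : ℝ}
    (hS : HasSum (fun n : ℕ => 1 / (n : ℝ) ^ k) S) :
    HasSum (fun n : ℕ => cos (n * (π / 3)) / n ^ k)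
      ((1 / 2 - 1 / 2 ^ k - 3 / 2 * (1 / 3 ^ k) + 3 * (1 / 6 ^ k)) * S) := by
  have H := (((hS.mul_left (1 / 2)).sub (hasSum_ite_dvd_one_div_pow hS two_ne_zero)).sub
    ((hasSum_ite_dvd_one_div_pow hS three_ne_zero).mul_left (3 / 2))).add
    ((hasSum_ite_dvd_one_div_pow hS (by norm_num : 6 ≠ 0)).mul_left 3)
  rw [show (1 / 2 - 1 / 2 ^ k - 3 / 2 * (1 / 3 ^ k) + 3 * (1 / 6 ^ k)) * S =
    1 / 2 * S - S / ((2 : ℕ) : ℝ) ^ k - 3 / 2 * (S / ((3 : ℕ) : ℝ) ^ k)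
      + 3 * (S / ((6 : ℕ) : ℝ) ^ k) by push_cast; ring]
  refine H.congr_fun fun n => ?_
  rw [cos_nat_mul_pi_div_three]
  split_ifs <;> ring

/-- `ζ(3) = (3/2) SLs(3; π/3) = (3/2) ∫_0^{π/3} (θ - π/3) log|2 sin(θ/2)| dθ`. -/
theorem stmt14 :
    (∑' m : ℕ+, (1 : ℝ) / (m : ℝ) ^ 3) =
      3 / 2 * ∫ θ in (0:ℝ)..(π / 3), (θ - π / 3) * Real.log |2 * Real.sin (θ / 2)| := by
  have hS := (summable_one_div_nat_pow.2 (by norm_num : 1 < 3)).hasSum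
  have hcos := hS.sub (hasSum_cos_nat_mul_pi_div_three_div_pow hS)
  have hbridge : ∀ θ : ℝ, |2 * sin (θ / 2)| = ‖1 - Complex.exp (θ * Complex.I)‖ := fun θ => by
    rw [norm_sub_rev, mul_comm (θ : ℂ), Complex.norm_exp_I_mul_ofReal_sub_one, Real.norm_eq_abs]
  simp_rw [hbridge]
  simp_rw [← sub_div] at hcos
  rw [tsum_pnat_eq_tsum_of_eq_zero (f := fun n : ℕ => 1 / (n : ℝ) ^ 3) (by simp),
    integral_sub_mul_log_norm_one_sub_exp, hcos.tsum_eq]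
  ring
end
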